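/- Binomial tail / incomplete beta identity underlying the Clopper–Pearson interval (Lemma 3 of the paper): For natural numbers n and k with 1 ≤ k ≤ n and any real p ∈ [0,1], the upper tail of the Binomial(n, p) distribution equals a regularized incomplete beta integral: ∑_{j=k}^{n} (n choose j) · p^j · (1 − p)^{n−j} = k · (n choose k) · ∫_{0}^{p} t^{k−1} · (1 − t)^{n−k} dt. -/

import Mathlib

open intervalIntegral

/-! Integrating by parts, `C(n,k) p^k (1-p)^(n-k)` is the difference of the right-hand sides
for `k` and `k + 1`, using `(k+1) C(n,k+1) = (n-k) C(n,k)`; the sum over `k ≤ j ≤ n` then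
telescopes, and the right-hand side vanishes for `k = n + 1`. -/

theorem hasDerivAt_pow_mul_one_sub_pow (a b : ℕ) (t : ℝ) :
    HasDerivAt (fun t : ℝ => t ^ a * (1 - t) ^ b)
      (a * t ^ (a - 1) * (1 - t) ^ b - b * t ^ a * (1 - t) ^ (b - 1)) t := by
  have hb : HasDerivAt (fun t : ℝ => (1 - t) ^ b) (b * (1 - t) ^ (b - 1) * -1) t :=
    (hasDerivAt_pow b (1 - t)).comp t ((hasDerivAt_id t).const_sub 1)
  exact ((hasDerivAt_pow a t).fun_mul hb).congr_deriv (by ring)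

theorem pow_mul_one_sub_pow_eq_integral_sub (a b : ℕ) (ha : 1 ≤ a) (p : ℝ) :
    p ^ a * (1 - p) ^ b =
      a * (∫ t in (0 : ℝ)..p, t ^ (a - 1) * (1 - t) ^ b) -
        b * ∫ t in (0 : ℝ)..p, t ^ a * (1 - t) ^ (b - 1) := by
  have hderiv := integral_eq_sub_of_hasDerivAt (a := 0) (b := p)
    (fun t _ => hasDerivAt_pow_mul_one_sub_pow a b t)
    ((by fun_prop : Continuous _).intervalIntegrable _ _)
  simp only [mul_assoc] at hderiv
  rw [integral_sub ((by fun_prop : Continuous _).intervalIntegrable _ _)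
      ((by fun_prop : Continuous _).intervalIntegrable _ _),
    integral_const_mul, integral_const_mul, zero_pow (by omega), zero_mul, sub_zero] at hderiv
  exact hderiv.symm

noncomputable def binomialBetaIntegral (n k : ℕ) (p : ℝ) : ℝ :=
  k * n.choose k * ∫ t in (0 : ℝ)..p, t ^ (k - 1) * (1 - t) ^ (n - k)

theorem binomialBetaIntegral_succ_self (n : ℕ) (p : ℝ) :
    binomialBetaIntegral n (n + 1) p = 0 := by
  simp [binomialBetaIntegral]

theorem choose_mul_pow_mul_one_sub_pow_eq_sub (n k : ℕ) (hk : 1 ≤ k) (p : ℝ) :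
    n.choose k * p ^ k * (1 - p) ^ (n - k) =
      binomialBetaIntegral n k p - binomialBetaIntegral n (k + 1) p := by
  have hchoose : ((k + 1 : ℕ) : ℝ) * n.choose (k + 1) = ((n - k : ℕ) : ℝ) * n.choose k := by
    exact_mod_cast (mul_comm _ _).trans ((Nat.choose_succ_right_eq n k).trans (mul_comm _ _))
  rw [binomialBetaIntegral, binomialBetaIntegral, hchoose, Nat.add_sub_cancel,
    Nat.sub_add_eq, mul_assoc, pow_mul_one_sub_pow_eq_integral_sub k (n - k) hk p]
  ring

theorem binomial_tail_eq_incomplete_beta_general (n k : ℕ) (hk1 : 1 ≤ k) (hkn : k ≤ n)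
    (p : ℝ) :
    ∑ j ∈ Finset.Icc k n, (n.choose j : ℝ) * p ^ j * (1 - p) ^ (n - j) =
      (k : ℝ) * (n.choose k : ℝ) * ∫ t in (0 : ℝ)..p, t ^ (k - 1) * (1 - t) ^ (n - k) := by
  calc ∑ j ∈ Finset.Icc k n, (n.choose j : ℝ) * p ^ j * (1 - p) ^ (n - j)
      = -∑ j ∈ Finset.Icc k n,
          (binomialBetaIntegral n (j + 1) p - binomialBetaIntegral n j p) := by
        rw [← Finset.sum_neg_distrib]
        refine Finset.sum_congr rfl fun j hj => ?_
        rw [choose_mul_pow_mul_one_sub_pow_eq_sub n j (hk1.trans (Finset.mem_Icc.1 hj).1), neg_sub]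
    _ = binomialBetaIntegral n k p := by
        rw [Finset.sum_Icc_sub hkn fun j => binomialBetaIntegral n j p,
          binomialBetaIntegral_succ_self, zero_sub, neg_neg]

/-- Binomial tail / incomplete beta identity underlying the Clopper–Pearson
interval: for `1 ≤ k ≤ n` and `p ∈ [0,1]`, the upper tail of the
`Binomial(n, p)` distribution equals a regularized incomplete beta integral. -/
theorem binomial_tail_eq_incomplete_beta (n k : ℕ) (hk1 : 1 ≤ k) (hkn : k ≤ n)
    (p : ℝ) (hp0 : 0 ≤ p) (hp1 : p ≤ 1) :
    ∑ j ∈ Finset.Icc k n, (n.choose j : ℝ) * p ^ j * (1 - p) ^ (n - j) =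
      (k : ℝ) * (n.choose k : ℝ) * ∫ t in (0 : ℝ)..p, t ^ (k - 1) * (1 - t) ^ (n - k) :=
  binomial_tail_eq_incomplete_beta_general n k hk1 hkn p
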